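/- arXiv:2210.07943 — 2 statements merged into one kernel-verified Lean document; each statement's English description precedes it below -/
import Mathlib

section
/- For the Leslie–Gower competition map with positive parameters, suppose X ∈ (0, K₁), Y > 0, and k(X) < h(X). Then L_h(X, h(X)) < 0 and, if additionally X ∈ (0, r₂/α₂), L_k(X, k(X)) > 0. -/
noncomputable def F (r₁ K₁ α₁ X Y : ℝ) : ℝ := (1 + r₁) * X / (1 + r₁ / K₁ * X + α₁ * Y)
noncomputable def G (r₂ K₂ α₂ X Y : ℝ) : ℝ := (1 + r₂) * Y / (1 + r₂ / K₂ * Y + α₂ * X)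
noncomputable def h (r₁ K₁ α₁ X : ℝ) : ℝ := r₁ / (α₁ * K₁) * (K₁ - X)
noncomputable def k (r₂ K₂ α₂ X : ℝ) : ℝ := K₂ / r₂ * (r₂ - α₂ * X)

/-!
The denominators of the two coordinates of the map differ from `1 + rᵢ` by a positive multiple of
the signed distance to the corresponding nullcline. Hence `F (X, h X) = X` and `G (X, k X) = k X`,
while `G (X, Y) < Y` above the nullcline `k` and `F (X, Y) > X` below the nullcline `h`. Since
`k X < h X`, the first claim becomes `G (X, h X) < h X`, and the second becomes
`k (F (X, k X)) < k X`, which holds because `k` is strictly decreasing and `F (X, k X) > X`.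
-/

section LeslieGower

variable {r₁ r₂ K₁ K₂ α₁ α₂ : ℝ}

lemma F_denom_eq (hK₁ : K₁ ≠ 0) (hα₁ : α₁ ≠ 0) (X Y : ℝ) :
    1 + r₁ / K₁ * X + α₁ * Y = 1 + r₁ + α₁ * (Y - h r₁ K₁ α₁ X) := by
  unfold h
  field_simp
  ring

lemma G_denom_eq (hr₂ : r₂ ≠ 0) (hK₂ : K₂ ≠ 0) (X Y : ℝ) :
    1 + r₂ / K₂ * Y + α₂ * X = 1 + r₂ + r₂ / K₂ * (Y - k r₂ K₂ α₂ X) := by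
  unfold k
  field_simp
  ring

lemma F_h_eq (hr₁ : 1 + r₁ ≠ 0) (hK₁ : K₁ ≠ 0) (hα₁ : α₁ ≠ 0) (X : ℝ) :
    F r₁ K₁ α₁ X (h r₁ K₁ α₁ X) = X := by
  rw [F, F_denom_eq hK₁ hα₁, sub_self, mul_zero, add_zero, mul_div_cancel_left₀ _ hr₁]

lemma G_k_eq (hr₂' : 1 + r₂ ≠ 0) (hr₂ : r₂ ≠ 0) (hK₂ : K₂ ≠ 0) (X : ℝ) :
    G r₂ K₂ α₂ X (k r₂ K₂ α₂ X) = k r₂ K₂ α₂ X := by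
  rw [G, G_denom_eq hr₂ hK₂, sub_self, mul_zero, add_zero, mul_div_cancel_left₀ _ hr₂']

lemma G_lt_of_k_lt (hr₂ : 0 < r₂) (hK₂ : 0 < K₂) {X Y : ℝ} (hY : 0 < Y)
    (hkY : k r₂ K₂ α₂ X < Y) : G r₂ K₂ α₂ X Y < Y := by
  have hgap : 0 < r₂ / K₂ * (Y - k r₂ K₂ α₂ X) := mul_pos (by positivity) (sub_pos.mpr hkY)
  rw [G, G_denom_eq hr₂.ne' hK₂.ne', div_lt_iff₀ (by linarith)]
  nlinarith

lemma lt_F_of_lt_h (hr₁ : 0 < r₁) (hK₁ : 0 < K₁) (hα₁ : 0 < α₁) {X Y : ℝ} (hX : 0 < X)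
    (hY : 0 ≤ Y) (hYh : Y < h r₁ K₁ α₁ X) : X < F r₁ K₁ α₁ X Y := by
  have hgap : α₁ * (Y - h r₁ K₁ α₁ X) < 0 := mul_neg_of_pos_of_neg hα₁ (sub_neg.mpr hYh)
  have hD : 0 < 1 + r₁ / K₁ * X + α₁ * Y := by positivity
  rw [F, lt_div_iff₀ hD, F_denom_eq hK₁.ne' hα₁.ne']
  nlinarith

lemma h_pos (hr₁ : 0 < r₁) (hK₁ : 0 < K₁) (hα₁ : 0 < α₁) {X : ℝ} (hX : X < K₁) :
    0 < h r₁ K₁ α₁ X :=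
  mul_pos (by positivity) (sub_pos.mpr hX)

lemma k_pos (hr₂ : 0 < r₂) (hK₂ : 0 < K₂) (hα₂ : 0 < α₂) {X : ℝ} (hX : X < r₂ / α₂) :
    0 < k r₂ K₂ α₂ X :=
  mul_pos (by positivity) (by rw [lt_div_iff₀ hα₂] at hX; linarith)

lemma k_strictAnti (hr₂ : 0 < r₂) (hK₂ : 0 < K₂) (hα₂ : 0 < α₂) : StrictAnti (k r₂ K₂ α₂) :=
  fun _ _ hXX' => mul_lt_mul_of_pos_left (by nlinarith) (by positivity)

end LeslieGower

theorem stmt7_general (r₁ r₂ K₁ K₂ α₁ α₂ : ℝ)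
    (hr₁ : 0 < r₁) (hr₂ : 0 < r₂) (hK₁ : 0 < K₁) (hK₂ : 0 < K₂)
    (hα₁ : 0 < α₁) (hα₂ : 0 < α₂)
    (X : ℝ) (hX : X ∈ Set.Ioo 0 K₁)
    (hkh : k r₂ K₂ α₂ X < h r₁ K₁ α₁ X) :
    (G r₂ K₂ α₂ X (h r₁ K₁ α₁ X) -
        h r₁ K₁ α₁ (F r₁ K₁ α₁ X (h r₁ K₁ α₁ X)) < 0) ∧
    (X < r₂ / α₂ →
      0 < G r₂ K₂ α₂ X (k r₂ K₂ α₂ X) -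
          k r₂ K₂ α₂ (F r₁ K₁ α₁ X (k r₂ K₂ α₂ X))) := by
  refine ⟨?_, fun hXr => ?_⟩
  · have hG := G_lt_of_k_lt hr₂ hK₂ (h_pos hr₁ hK₁ hα₁ hX.2) hkh
    rw [F_h_eq (by linarith) hK₁.ne' hα₁.ne']
    linarith
  · have hXF := lt_F_of_lt_h hr₁ hK₁ hα₁ hX.1 (k_pos hr₂ hK₂ hα₂ hXr).le hkh
    rw [G_k_eq (by linarith) hr₂.ne' hK₂.ne']
    linarith [k_strictAnti hr₂ hK₂ hα₂ hXF]

theorem stmt7 (r₁ r₂ K₁ K₂ α₁ α₂ : ℝ)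
    (hr₁ : 0 < r₁) (hr₂ : 0 < r₂) (hK₁ : 0 < K₁) (hK₂ : 0 < K₂)
    (hα₁ : 0 < α₁) (hα₂ : 0 < α₂)
    (X Y : ℝ) (hX : X ∈ Set.Ioo 0 K₁) (hY : 0 < Y)
    (hkh : k r₂ K₂ α₂ X < h r₁ K₁ α₁ X) :
    (G r₂ K₂ α₂ X (h r₁ K₁ α₁ X) -
        h r₁ K₁ α₁ (F r₁ K₁ α₁ X (h r₁ K₁ α₁ X)) < 0) ∧
    (X < r₂ / α₂ →
      0 < G r₂ K₂ α₂ X (k r₂ K₂ α₂ X) -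
          k r₂ K₂ α₂ (F r₁ K₁ α₁ X (k r₂ K₂ α₂ X))) :=
  stmt7_general r₁ r₂ K₁ K₂ α₁ α₂ hr₁ hr₂ hK₁ hK₂ hα₁ hα₂ X hX hkh
end

section
/- For the Leslie–Gower competition map with C₁₂ < 0 and C₂₁ < 0, the regions R₂ = {(X,Y) : X, Y > 0, k(X) ≤ Y ≤ h(X)} \ {E*} and R₄ = {(X,Y) : X, Y > 0, h(X) ≤ Y ≤ k(X)} \ {E*} are each positively invariant under the map. -/
noncomputable def T (r₁ r₂ K₁ K₂ α₁ α₂ : ℝ) (p : ℝ × ℝ) : ℝ × ℝ :=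
  (F r₁ K₁ α₁ p.1 p.2, G r₂ K₂ α₂ p.1 p.2)

section OneSpecies

variable {r K α : ℝ}

theorem sub_k_eq (hr : r ≠ 0) (hK : K ≠ 0) (hα : α ≠ 0) (X Y : ℝ) :
    Y - k r K α X = α * K / r * (X - h r K α Y) := by
  unfold h k
  field_simp
  ring

theorem F_sub_self_eq (hK : K ≠ 0) (hα : α ≠ 0) {X Y : ℝ} (hD : 1 + r / K * X + α * Y ≠ 0) :
    F r K α X Y - X = α * X * (h r K α X - Y) / (1 + r / K * X + α * Y) := by
  have hF : F r K α X Y * (1 + r / K * X + α * Y) = (1 + r) * X := div_mul_cancel₀ _ hD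
  rw [eq_div_iff hD]
  unfold h
  field_simp at hF ⊢
  linear_combination hF

theorem h_F_sub_eq (hK : K ≠ 0) (hα : α ≠ 0) {X Y : ℝ} (hD : 1 + r / K * X + α * Y ≠ 0) :
    h r K α (F r K α X Y) - Y = (1 + α * Y) * (h r K α X - Y) / (1 + r / K * X + α * Y) := by
  have hF : F r K α X Y * (1 + r / K * X + α * Y) = (1 + r) * X := div_mul_cancel₀ _ hD
  rw [eq_div_iff hD]
  unfold h
  field_simp at hF ⊢
  linear_combination -r * hF

variable (hr : 0 < r) (hK : 0 < K) (hα : 0 < α)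
include hr hK hα

theorem k_le_iff_h_le {X Y : ℝ} : k r K α X ≤ Y ↔ h r K α Y ≤ X := by
  rw [← sub_nonneg, sub_k_eq hr.ne' hK.ne' hα.ne', mul_nonneg_iff_of_pos_left (by positivity),
    sub_nonneg]

theorem le_k_iff_le_h {X Y : ℝ} : Y ≤ k r K α X ↔ X ≤ h r K α Y := by
  rw [← sub_nonpos, sub_k_eq hr.ne' hK.ne' hα.ne', ← neg_nonneg, ← mul_neg,
    mul_nonneg_iff_of_pos_left (by positivity), neg_nonneg, sub_nonpos]

theorem F_pos {X Y : ℝ} (hX : 0 < X) (hY : 0 ≤ Y) : 0 < F r K α X Y := by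
  unfold F
  positivity

variable {X Y : ℝ} (hX : 0 ≤ X) (hY : 0 ≤ Y)
include hX hY

theorem le_F_of_le_h (hYh : Y ≤ h r K α X) : X ≤ F r K α X Y := by
  rw [← sub_nonneg, F_sub_self_eq hK.ne' hα.ne' (by positivity)]
  exact div_nonneg (by have := sub_nonneg.2 hYh; positivity) (by positivity)

theorem F_le_of_h_le (hhY : h r K α X ≤ Y) : F r K α X Y ≤ X := by
  rw [← sub_nonpos, F_sub_self_eq hK.ne' hα.ne' (by positivity)]
  exact div_nonpos_of_nonpos_of_nonneg
    (mul_nonpos_of_nonneg_of_nonpos (by positivity) (sub_nonpos.2 hhY)) (by positivity)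

theorem le_h_F_of_le_h (hYh : Y ≤ h r K α X) : Y ≤ h r K α (F r K α X Y) := by
  rw [← sub_nonneg, h_F_sub_eq hK.ne' hα.ne' (by positivity)]
  exact div_nonneg (by have := sub_nonneg.2 hYh; positivity) (by positivity)

theorem h_F_le_of_h_le (hhY : h r K α X ≤ Y) : h r K α (F r K α X Y) ≤ Y := by
  rw [← sub_nonpos, h_F_sub_eq hK.ne' hα.ne' (by positivity)]
  exact div_nonpos_of_nonpos_of_nonneg
    (mul_nonpos_of_nonneg_of_nonpos (by positivity) (sub_nonpos.2 hhY)) (by positivity)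

end OneSpecies

section Competition

variable {r₁ r₂ K₁ K₂ α₁ α₂ : ℝ}

theorem coexistence_den_pos (hr₁ : 0 < r₁) (hr₂ : 0 < r₂) (hα₁ : 0 < α₁) (hα₂ : 0 < α₂)
    (hC12 : r₁ / α₁ - K₂ < 0) (hC21 : r₂ / α₂ - K₁ < 0) :
    0 < α₁ * α₂ * K₁ * K₂ - r₁ * r₂ := by
  have h₁ : r₁ < α₁ * K₂ := by rw [← div_lt_iff₀' hα₁]; linarith
  have h₂ : r₂ < α₂ * K₁ := by rw [← div_lt_iff₀' hα₂]; linarith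
  nlinarith [mul_lt_mul'' h₁ h₂ hr₁.le hr₂.le]

theorem h_sub_k_eq (hr₂ : r₂ ≠ 0) (hK₁ : K₁ ≠ 0) (hα₁ : α₁ ≠ 0)
    (hD : α₁ * α₂ * K₁ * K₂ - r₁ * r₂ ≠ 0) {Xs : ℝ}
    (hXs : Xs = r₂ * K₁ * (α₁ * K₂ - r₁) / (α₁ * α₂ * K₁ * K₂ - r₁ * r₂)) (X : ℝ) :
    h r₁ K₁ α₁ X - k r₂ K₂ α₂ X =
      (α₁ * α₂ * K₁ * K₂ - r₁ * r₂) / (α₁ * K₁ * r₂) * (X - Xs) := by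
  subst hXs
  -- an opaque `D` stops `field_simp` from reshaping the denominator out of sight of `hD`
  set D := α₁ * α₂ * K₁ * K₂ - r₁ * r₂ with hD_def
  unfold h k
  field_simp
  rw [hD_def]
  ring

theorem h_coexistence (hK₁ : K₁ ≠ 0) (hα₁ : α₁ ≠ 0)
    (hD : α₁ * α₂ * K₁ * K₂ - r₁ * r₂ ≠ 0) {Xs Ys : ℝ}
    (hXs : Xs = r₂ * K₁ * (α₁ * K₂ - r₁) / (α₁ * α₂ * K₁ * K₂ - r₁ * r₂))
    (hYs : Ys = r₁ * K₂ * (α₂ * K₁ - r₂) / (α₁ * α₂ * K₁ * K₂ - r₁ * r₂)) :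
    h r₁ K₁ α₁ Xs = Ys := by
  subst hXs hYs
  set D := α₁ * α₂ * K₁ * K₂ - r₁ * r₂ with hD_def
  unfold h
  field_simp
  rw [hD_def]
  ring

theorem k_coexistence (hr₂ : r₂ ≠ 0) (hK₁ : K₁ ≠ 0) (hα₁ : α₁ ≠ 0)
    (hD : α₁ * α₂ * K₁ * K₂ - r₁ * r₂ ≠ 0) {Xs Ys : ℝ}
    (hXs : Xs = r₂ * K₁ * (α₁ * K₂ - r₁) / (α₁ * α₂ * K₁ * K₂ - r₁ * r₂))
    (hYs : Ys = r₁ * K₂ * (α₂ * K₁ - r₂) / (α₁ * α₂ * K₁ * K₂ - r₁ * r₂)) :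
    k r₂ K₂ α₂ Xs = Ys := by
  have := h_sub_k_eq hr₂ hK₁ hα₁ hD hXs Xs
  rw [sub_self, mul_zero, sub_eq_zero, h_coexistence hK₁ hα₁ hD hXs hYs] at this
  exact this.symm

section Crossing

variable (hr₂ : 0 < r₂) (hK₁ : 0 < K₁) (hα₁ : 0 < α₁) (hD : 0 < α₁ * α₂ * K₁ * K₂ - r₁ * r₂)
  {Xs : ℝ} (hXs : Xs = r₂ * K₁ * (α₁ * K₂ - r₁) / (α₁ * α₂ * K₁ * K₂ - r₁ * r₂)) {X : ℝ}
include hr₂ hK₁ hα₁ hD hXs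

theorem k_le_h_iff : k r₂ K₂ α₂ X ≤ h r₁ K₁ α₁ X ↔ Xs ≤ X := by
  rw [← sub_nonneg, h_sub_k_eq hr₂.ne' hK₁.ne' hα₁.ne' hD.ne' hXs,
    mul_nonneg_iff_of_pos_left (by positivity), sub_nonneg]

theorem h_le_k_iff : h r₁ K₁ α₁ X ≤ k r₂ K₂ α₂ X ↔ X ≤ Xs := by
  rw [← sub_nonpos, h_sub_k_eq hr₂.ne' hK₁.ne' hα₁.ne' hD.ne' hXs, ← neg_nonneg, ← mul_neg,
    mul_nonneg_iff_of_pos_left (by positivity), neg_nonneg, sub_nonpos]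

end Crossing

section Invariance

variable (hr₁ : 0 < r₁) (hr₂ : 0 < r₂) (hK₁ : 0 < K₁) (hK₂ : 0 < K₂) (hα₁ : 0 < α₁) (hα₂ : 0 < α₂)
  {Xs Ys : ℝ} (hEh : h r₁ K₁ α₁ Xs = Ys) (hEk : k r₂ K₂ α₂ Xs = Ys)
  {X Y : ℝ} (hX : 0 < X) (hY : 0 < Y) (hne : (X, Y) ≠ (Xs, Ys))
include hr₁ hr₂ hK₁ hK₂ hα₁ hα₂ hEh hEk hX hY hne

theorem mapsTo_R₂ (hcross : k r₂ K₂ α₂ X ≤ h r₁ K₁ α₁ X → Xs ≤ X)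
    (hkY : k r₂ K₂ α₂ X ≤ Y) (hYh : Y ≤ h r₁ K₁ α₁ X) :
    0 < F r₁ K₁ α₁ X Y ∧ 0 < G r₂ K₂ α₂ X Y ∧
      k r₂ K₂ α₂ (F r₁ K₁ α₁ X Y) ≤ G r₂ K₂ α₂ X Y ∧
      G r₂ K₂ α₂ X Y ≤ h r₁ K₁ α₁ (F r₁ K₁ α₁ X Y) ∧
      (F r₁ K₁ α₁ X Y, G r₂ K₂ α₂ X Y) ≠ (Xs, Ys) := by
  have hXF : X ≤ F r₁ K₁ α₁ X Y := le_F_of_le_h hr₁ hK₁ hα₁ hX.le hY.le hYh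
  have hhY : h r₂ K₂ α₂ Y ≤ X := (k_le_iff_h_le hr₂ hK₂ hα₂).1 hkY
  refine ⟨F_pos hr₁ hK₁ hα₁ hX hY.le, F_pos hr₂ hK₂ hα₂ hY hX.le, ?_, ?_, ?_⟩
  · rw [k_le_iff_h_le hr₂ hK₂ hα₂]
    exact (h_F_le_of_h_le hr₂ hK₂ hα₂ hY.le hX.le hhY).trans hXF
  · exact (F_le_of_h_le hr₂ hK₂ hα₂ hY.le hX.le hhY).trans
      (le_h_F_of_le_h hr₁ hK₁ hα₁ hX.le hY.le hYh)
  · intro hE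
    have hXs : X = Xs := (hXF.trans_eq (congrArg Prod.fst hE)).antisymm (hcross (hkY.trans hYh))
    subst hXs
    exact hne (Prod.ext rfl (le_antisymm (hYh.trans_eq hEh) (hEk.symm.trans_le hkY)))

theorem mapsTo_R₄ (hcross : h r₁ K₁ α₁ X ≤ k r₂ K₂ α₂ X → X ≤ Xs)
    (hhY : h r₁ K₁ α₁ X ≤ Y) (hYk : Y ≤ k r₂ K₂ α₂ X) :
    0 < F r₁ K₁ α₁ X Y ∧ 0 < G r₂ K₂ α₂ X Y ∧
      h r₁ K₁ α₁ (F r₁ K₁ α₁ X Y) ≤ G r₂ K₂ α₂ X Y ∧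
      G r₂ K₂ α₂ X Y ≤ k r₂ K₂ α₂ (F r₁ K₁ α₁ X Y) ∧
      (F r₁ K₁ α₁ X Y, G r₂ K₂ α₂ X Y) ≠ (Xs, Ys) := by
  have hFX : F r₁ K₁ α₁ X Y ≤ X := F_le_of_h_le hr₁ hK₁ hα₁ hX.le hY.le hhY
  have hXh : X ≤ h r₂ K₂ α₂ Y := (le_k_iff_le_h hr₂ hK₂ hα₂).1 hYk
  refine ⟨F_pos hr₁ hK₁ hα₁ hX hY.le, F_pos hr₂ hK₂ hα₂ hY hX.le, ?_, ?_, ?_⟩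
  · exact (h_F_le_of_h_le hr₁ hK₁ hα₁ hX.le hY.le hhY).trans
      (le_F_of_le_h hr₂ hK₂ hα₂ hY.le hX.le hXh)
  · rw [le_k_iff_le_h hr₂ hK₂ hα₂]
    exact hFX.trans (le_h_F_of_le_h hr₂ hK₂ hα₂ hY.le hX.le hXh)
  · intro hE
    have hXs : X = Xs := (hcross (hhY.trans hYk)).antisymm ((congrArg Prod.fst hE).symm.trans_le hFX)
    subst hXs
    exact hne (Prod.ext rfl (le_antisymm (hYk.trans_eq hEk) (hEh.symm.trans_le hhY)))

end Invariance

end Competition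

theorem stmt16 (r₁ r₂ K₁ K₂ α₁ α₂ : ℝ)
    (hr₁ : 0 < r₁) (hr₂ : 0 < r₂) (hK₁ : 0 < K₁) (hK₂ : 0 < K₂)
    (hα₁ : 0 < α₁) (hα₂ : 0 < α₂)
    (hC12 : r₁ / α₁ - K₂ < 0) (hC21 : r₂ / α₂ - K₁ < 0)
    (Xs Ys : ℝ)
    (hXs : Xs = r₂ * K₁ * (α₁ * K₂ - r₁) / (α₁ * α₂ * K₁ * K₂ - r₁ * r₂))
    (hYs : Ys = r₁ * K₂ * (α₂ * K₁ - r₂) / (α₁ * α₂ * K₁ * K₂ - r₁ * r₂)) :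
    (∀ X Y : ℝ, 0 < X → 0 < Y → k r₂ K₂ α₂ X ≤ Y → Y ≤ h r₁ K₁ α₁ X →
        (X, Y) ≠ (Xs, Ys) →
        0 < F r₁ K₁ α₁ X Y ∧ 0 < G r₂ K₂ α₂ X Y ∧
          k r₂ K₂ α₂ (F r₁ K₁ α₁ X Y) ≤ G r₂ K₂ α₂ X Y ∧
          G r₂ K₂ α₂ X Y ≤ h r₁ K₁ α₁ (F r₁ K₁ α₁ X Y) ∧
          (F r₁ K₁ α₁ X Y, G r₂ K₂ α₂ X Y) ≠ (Xs, Ys)) ∧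
    (∀ X Y : ℝ, 0 < X → 0 < Y → h r₁ K₁ α₁ X ≤ Y → Y ≤ k r₂ K₂ α₂ X →
        (X, Y) ≠ (Xs, Ys) →
        0 < F r₁ K₁ α₁ X Y ∧ 0 < G r₂ K₂ α₂ X Y ∧
          h r₁ K₁ α₁ (F r₁ K₁ α₁ X Y) ≤ G r₂ K₂ α₂ X Y ∧
          G r₂ K₂ α₂ X Y ≤ k r₂ K₂ α₂ (F r₁ K₁ α₁ X Y) ∧
          (F r₁ K₁ α₁ X Y, G r₂ K₂ α₂ X Y) ≠ (Xs, Ys)) := by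
  have hD := coexistence_den_pos hr₁ hr₂ hα₁ hα₂ hC12 hC21
  have hEh := h_coexistence hK₁.ne' hα₁.ne' hD.ne' hXs hYs
  have hEk := k_coexistence hr₂.ne' hK₁.ne' hα₁.ne' hD.ne' hXs hYs
  refine ⟨fun X Y hX hY hkY hYh hne => ?_, fun X Y hX hY hhY hYk hne => ?_⟩
  · exact mapsTo_R₂ hr₁ hr₂ hK₁ hK₂ hα₁ hα₂ hEh hEk hX hY hne
      (k_le_h_iff hr₂ hK₁ hα₁ hD hXs).1 hkY hYh
  · exact mapsTo_R₄ hr₁ hr₂ hK₁ hK₂ hα₁ hα₂ hEh hEk hX hY hne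
      (h_le_k_iff hr₂ hK₁ hα₁ hD hXs).1 hhY hYk
end
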